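/- Let C be a closed convex cone in R^m, Π the projection onto C*, γ > 0, and Θ : R^n → R^m. For any p ∈ C*, u^k, u^{k+1} ∈ R^n, set q^k = Π(p^k + γΘ(u^k)) and p^{k+1} = Π(p^k + γΘ(u^{k+1})). Then ⟨p − q^k, Θ(u^{k+1})⟩ ≤ (1/(2γ))[‖p−p^k‖² − ‖p−p^{k+1}‖²] − (1/(2γ))‖q^k − p^k‖² + (γ/2)‖Θ(u^k) − Θ(u^{k+1})‖². -/

import Mathlib

/-
Write `a = Π(pᵏ + γΘ(uᵏ⁺¹)) = pᵏ⁺¹` and `b = Π(pᵏ + γΘ(uᵏ)) = qᵏ`. The obtuse-angle inequality at `a`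
with test point `p`, expanded by the law of cosines, bounds `2⟨p - a, γΘ(uᵏ⁺¹)⟩`; the one at `b` with
test point `a` bounds `2⟨a - b, γΘ(uᵏ⁺¹)⟩` after absorbing `‖a - b‖²` into `‖γΘ(uᵏ) - γΘ(uᵏ⁺¹)‖²`.
Adding the two and dividing by `2γ` gives the claim.
-/

open scoped RealInnerProductSpace

/-- `P` is the metric projection onto `S`. -/
def IsProjOn {E : Type*} [NormedAddCommGroup E] (S : Set E) (P : E → E) : Prop :=
  ∀ x, P x ∈ S ∧ ∀ y ∈ S, ‖x - P x‖ ≤ ‖x - y‖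

/-- The dual cone `C* = {y : ⟨x, y⟩ ≥ 0 for all x ∈ C}`. -/
def dualCone' {E : Type*} [NormedAddCommGroup E] [InnerProductSpace ℝ E] (C : Set E) : Set E :=
  {y | ∀ x ∈ C, 0 ≤ ⟪x, y⟫}

section

variable {E : Type*} [NormedAddCommGroup E] [InnerProductSpace ℝ E]

theorem convex_dualCone' (C : Set E) : Convex ℝ (dualCone' C) :=
  (PointedCone.dual (innerₗ E) C).convex

namespace IsProjOn

variable {S : Set E} {P : E → E}

theorem inner_sub_le_zero (hS : Convex ℝ S) (hP : IsProjOn S P) (x : E) {y : E} (hy : y ∈ S) :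
    ⟪x - P x, y - P x⟫ ≤ 0 := by
  obtain ⟨hPx, hmin⟩ := hP x
  have : Nonempty S := ⟨⟨P x, hPx⟩⟩
  have hbdd : BddBelow (Set.range fun z : S => ‖x - z‖) :=
    ⟨0, by rintro _ ⟨z, rfl⟩; exact norm_nonneg _⟩
  have hinf : ‖x - P x‖ = ⨅ z : S, ‖x - z‖ :=
    le_antisymm (le_ciInf fun z => hmin z z.2) (ciInf_le hbdd ⟨P x, hPx⟩)
  exact (norm_eq_iInf_iff_real_inner_le_zero hS hPx).1 hinf y hy

theorem two_inner_sub_le_of_mem (hS : Convex ℝ S) (hP : IsProjOn S P) (w u : E) {p : E}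
    (hp : p ∈ S) :
    2 * ⟪p - P (w + u), u⟫ ≤ ‖p - w‖ ^ 2 - ‖p - P (w + u)‖ ^ 2 - ‖P (w + u) - w‖ ^ 2 := by
  have hobtuse := hP.inner_sub_le_zero hS (w + u) hp
  set a := P (w + u)
  rw [show w + u - a = u - (a - w) by abel, inner_sub_left, real_inner_comm (p - a) u,
    real_inner_comm (p - a) (a - w)] at hobtuse
  rw [show p - w = (p - a) + (a - w) by abel, norm_add_sq_real]
  linarith

theorem two_inner_sub_le (hS : Convex ℝ S) (hP : IsProjOn S P) (w u v : E) :
    2 * ⟪P (w + u) - P (w + v), u⟫ ≤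
      ‖u - v‖ ^ 2 + ‖P (w + u) - w‖ ^ 2 - ‖P (w + v) - w‖ ^ 2 := by
  have hobtuse := hP.inner_sub_le_zero hS (w + v) (hP (w + u)).1
  set a := P (w + u)
  set b := P (w + v)
  rw [show w + v - b = v - (b - w) by abel, inner_sub_left, real_inner_comm (a - b) v,
    real_inner_comm (a - b) (b - w)] at hobtuse
  have hcos : ‖a - w‖ ^ 2 = ‖a - b‖ ^ 2 + 2 * ⟪a - b, b - w⟫ + ‖b - w‖ ^ 2 := by
    rw [← norm_add_sq_real, sub_add_sub_cancel]
  have hsq : 2 * ⟪a - b, u - v⟫ ≤ ‖a - b‖ ^ 2 + ‖u - v‖ ^ 2 := by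
    linarith [norm_sub_sq_real (a - b) (u - v), sq_nonneg ‖a - b - (u - v)‖]
  have hsplit : ⟪a - b, u⟫ = ⟪a - b, u - v⟫ + ⟪a - b, v⟫ := by
    rw [← inner_add_right, sub_add_cancel]
  linarith

end IsProjOn

end

theorem stmt14_general {n m : ℕ} (C : Set (EuclideanSpace ℝ (Fin m)))
    (Proj : EuclideanSpace ℝ (Fin m) → EuclideanSpace ℝ (Fin m))
    (hProj : IsProjOn (dualCone' C) Proj)
    (γ : ℝ) (hγ : 0 < γ)
    (Θ : EuclideanSpace ℝ (Fin n) → EuclideanSpace ℝ (Fin m))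
    (p pk : EuclideanSpace ℝ (Fin m)) (hp : p ∈ dualCone' C)
    (uk uk1 : EuclideanSpace ℝ (Fin n))
    (qk pk1 : EuclideanSpace ℝ (Fin m))
    (hqk : qk = Proj (pk + γ • Θ uk)) (hpk1 : pk1 = Proj (pk + γ • Θ uk1)) :
    ⟪p - qk, Θ uk1⟫ ≤
      1 / (2 * γ) * (‖p - pk‖ ^ 2 - ‖p - pk1‖ ^ 2) - 1 / (2 * γ) * ‖qk - pk‖ ^ 2 +
        γ / 2 * ‖Θ uk - Θ uk1‖ ^ 2 := by
  have hS := convex_dualCone' C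
  have hnear := hProj.two_inner_sub_le_of_mem hS pk (γ • Θ uk1) hp
  have hfar := hProj.two_inner_sub_le hS pk (γ • Θ uk1) (γ • Θ uk)
  rw [← hpk1] at hnear
  rw [← hpk1, ← hqk] at hfar
  have hsum : 2 * γ * ⟪p - qk, Θ uk1⟫ ≤
      ‖p - pk‖ ^ 2 - ‖p - pk1‖ ^ 2 - ‖qk - pk‖ ^ 2 + γ ^ 2 * ‖Θ uk - Θ uk1‖ ^ 2 := by
    rw [← smul_sub, norm_smul, Real.norm_of_nonneg hγ.le, norm_sub_rev, mul_pow] at hfar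
    rw [real_inner_smul_right] at hnear hfar
    have hsplit : ⟪p - qk, Θ uk1⟫ = ⟪p - pk1, Θ uk1⟫ + ⟪pk1 - qk, Θ uk1⟫ := by
      rw [← inner_add_left, sub_add_sub_cancel]
    rw [hsplit]
    linarith
  have h2γ : (0 : ℝ) < 2 * γ := by positivity
  calc ⟪p - qk, Θ uk1⟫
      = 2 * γ * ⟪p - qk, Θ uk1⟫ / (2 * γ) := by field_simp
    _ ≤ (‖p - pk‖ ^ 2 - ‖p - pk1‖ ^ 2 - ‖qk - pk‖ ^ 2 + γ ^ 2 * ‖Θ uk - Θ uk1‖ ^ 2) / (2 * γ) :=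
        div_le_div_of_nonneg_right hsum h2γ.le
    _ = _ := by field_simp

theorem stmt14 {n m : ℕ} (C : Set (EuclideanSpace ℝ (Fin m))) (hCne : C.Nonempty)
    (hCclosed : IsClosed C) (hCconv : Convex ℝ C)
    (hCcone : ∀ x ∈ C, ∀ a : ℝ, 0 ≤ a → a • x ∈ C)
    (Proj : EuclideanSpace ℝ (Fin m) → EuclideanSpace ℝ (Fin m))
    (hProj : IsProjOn (dualCone' C) Proj)
    (γ : ℝ) (hγ : 0 < γ)
    (Θ : EuclideanSpace ℝ (Fin n) → EuclideanSpace ℝ (Fin m))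
    (p pk : EuclideanSpace ℝ (Fin m)) (hp : p ∈ dualCone' C)
    (uk uk1 : EuclideanSpace ℝ (Fin n))
    (qk pk1 : EuclideanSpace ℝ (Fin m))
    (hqk : qk = Proj (pk + γ • Θ uk)) (hpk1 : pk1 = Proj (pk + γ • Θ uk1)) :
    ⟪p - qk, Θ uk1⟫ ≤
      1 / (2 * γ) * (‖p - pk‖ ^ 2 - ‖p - pk1‖ ^ 2) - 1 / (2 * γ) * ‖qk - pk‖ ^ 2 +
        γ / 2 * ‖Θ uk - Θ uk1‖ ^ 2 :=
  stmt14_general C Proj hProj γ hγ Θ p pk hp uk uk1 qk pk1 hqk hpk1
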